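/- arXiv:0806.3191 — 3 statements merged into one kernel-verified Lean document; each statement's English description precedes it below -/
import Mathlib

section
/- For 0 < ω ≤ 4/√π, the minimum of the Thomas-Fermi functional E^{TF}[ρ] = ∫_{B₁} (ρ² − ω²r²ρ/4) dx over nonnegative densities ρ with ∫_{B₁} ρ = 1 equals 1/π − ω²/8 − πω⁴/768, and is attained by ρ^{TF}(r) = 1/π + ω²/16 − (ω²/8)(1−r²). -/
/-!
Completing the square. The density `ρTF` is affine in `r²` with `2 ρTF(r) - ω² r² / 4 = μ`
constant (`μ = 2/π - ω²/8`), so pointwise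
`ρ² - ω² r² ρ / 4 = (ρ - ρTF)² + μ ρ - ρTF² ≥ μ ρ - ρTF²`.
Integrating over the unit disc with `∫ ρ = 1` gives `E[ρ] ≥ μ - ∫ ρTF²`, and both this bound and
`E[ρTF]` reduce to the moments `∫_{B₁} |x|^k = 2π / (k + 2)`.
-/

open Real MeasureTheory Metric Module Set

lemma setIntegral_ball_norm_pow {E : Type*} [NormedAddCommGroup E] [NormedSpace ℝ E]
    [MeasurableSpace E] [BorelSpace E] [FiniteDimensional ℝ E] [Nontrivial E]
    (μ : Measure E) [μ.IsAddHaarMeasure] (k : ℕ) :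
    ∫ x in ball (0 : E) 1, ‖x‖ ^ k ∂μ = finrank ℝ E / (finrank ℝ E + k) * μ.real (ball 0 1) := by
  set n := finrank ℝ E
  have hn : 0 < n := finrank_pos
  have hradial : ∫ y in Ioi (0 : ℝ), y ^ (n - 1) • (Iio 1).indicator (· ^ k) y = 1 / (n + k) := by
    have hpow (y : ℝ) :
        y ^ (n - 1) • (Iio 1).indicator (· ^ k) y = (Iio 1).indicator (· ^ (n - 1 + k)) y := by
      by_cases hy : y ∈ Iio (1 : ℝ) <;> simp [hy, pow_add]
    simp_rw [hpow]
    rw [setIntegral_indicator measurableSet_Iio, Ioi_inter_Iio, ← integral_Ioc_eq_integral_Ioo,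
      ← intervalIntegral.integral_of_le zero_le_one, integral_pow,
      show ((n - 1 + k : ℕ) : ℝ) + 1 = n + k by norm_cast; omega]
    simp
  calc ∫ x in ball (0 : E) 1, ‖x‖ ^ k ∂μ = ∫ x, (Iio (1 : ℝ)).indicator (· ^ k) ‖x‖ ∂μ := by
        rw [← integral_indicator measurableSet_ball]
        congr 1 with x
        by_cases hx : ‖x‖ < 1 <;> simp [indicator, hx]
    _ = _ := by
      rw [integral_fun_norm_addHaar, hradial, nsmul_eq_mul, smul_eq_mul]
      field_simp
      ring

lemma Continuous.integrableOn_ball {E : Type*} [NormedAddCommGroup E] [ProperSpace E]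
    [MeasurableSpace E] [OpensMeasurableSpace E] {μ : Measure E} [IsFiniteMeasureOnCompacts μ]
    {f : E → ℝ} (hf : Continuous f) (x : E) (r : ℝ) : IntegrableOn f (ball x r) μ :=
  (hf.locallyIntegrable.integrableOn_isCompact (isCompact_closedBall x r)).mono_set
    ball_subset_closedBall

lemma IntegrableOn.norm_pow_mul_unitBall {E : Type*} [NormedAddCommGroup E] [MeasurableSpace E]
    [OpensMeasurableSpace E] {μ : Measure E} {f : E → ℝ} (hf : IntegrableOn f (ball 0 1) μ)
    (k : ℕ) : IntegrableOn (fun x => ‖x‖ ^ k * f x) (ball 0 1) μ := by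
  refine hf.bdd_mul (c := 1) (continuous_norm.pow k).aestronglyMeasurable ?_
  filter_upwards [ae_restrict_mem measurableSet_ball] with x hx
  rw [norm_pow, norm_norm]
  exact pow_le_one₀ (norm_nonneg x) (mem_ball_zero_iff.mp hx).le

lemma sub_integral_sq_le_integral_sq_sub_mul {α : Type*} [MeasurableSpace α] {μ : Measure α}
    {ρ g V : α → ℝ} {c : ℝ} (hρ : Integrable ρ μ) (hρ2 : Integrable (fun x => ρ x ^ 2) μ)
    (hVρ : Integrable (fun x => V x * ρ x) μ) (hg2 : Integrable (fun x => g x ^ 2) μ)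
    (hc : ∀ᵐ x ∂μ, 2 * g x - V x = c) (hmass : ∫ x, ρ x ∂μ = 1) :
    c - ∫ x, g x ^ 2 ∂μ ≤ ∫ x, (ρ x ^ 2 - V x * ρ x) ∂μ := by
  calc c - ∫ x, g x ^ 2 ∂μ = ∫ x, (c * ρ x - g x ^ 2) ∂μ := by
        rw [integral_sub (hρ.const_mul c) hg2, integral_const_mul, hmass, mul_one]
    _ ≤ ∫ x, (ρ x ^ 2 - V x * ρ x) ∂μ := by
      refine integral_mono_ae ((hρ.const_mul c).sub hg2) (hρ2.sub hVρ) ?_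
      filter_upwards [hc] with x hx
      rw [← hx]
      nlinarith [sq_nonneg (ρ x - g x)]

lemma measureReal_unitBall_fin_two :
    volume.real (ball (0 : EuclideanSpace ℝ (Fin 2)) 1) = π := by
  simp [measureReal_def, pi_pos.le]

lemma setIntegral_unitBall_fin_two_quartic (a b c : ℝ) :
    ∫ x in ball (0 : EuclideanSpace ℝ (Fin 2)) 1, (a + b * ‖x‖ ^ 2 + c * ‖x‖ ^ 4)
      = π * (a + b / 2 + c / 3) := by
  have hmoment (k : ℕ) :
      ∫ x in ball (0 : EuclideanSpace ℝ (Fin 2)) 1, ‖x‖ ^ k = 2 * π / (2 + k) := by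
    rw [setIntegral_ball_norm_pow, finrank_euclideanSpace_fin, measureReal_unitBall_fin_two]
    push_cast
    ring
  have hint (k : ℕ) : IntegrableOn (fun x : EuclideanSpace ℝ (Fin 2) => ‖x‖ ^ k) (ball 0 1) :=
    (continuous_norm.pow k).integrableOn_ball 0 1
  have hconst : IntegrableOn (fun _ : EuclideanSpace ℝ (Fin 2) => a) (ball 0 1) :=
    integrableOn_const
  have hquad : IntegrableOn (fun x : EuclideanSpace ℝ (Fin 2) => a + b * ‖x‖ ^ 2) (ball 0 1) :=
    hconst.add ((hint 2).const_mul b)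
  rw [integral_add hquad ((hint 4).const_mul c), integral_add hconst ((hint 2).const_mul b),
    setIntegral_const, measureReal_unitBall_fin_two, integral_const_mul, integral_const_mul,
    hmoment, hmoment]
  push_cast
  ring

section ThomasFermi

variable (ω : ℝ)

noncomputable def tfDensity (r : ℝ) : ℝ := 1 / π + ω ^ 2 / 16 - ω ^ 2 / 8 * (1 - r ^ 2)

lemma tfDensity_sq (r : ℝ) :
    tfDensity ω r ^ 2 = (1 / π - ω ^ 2 / 16) ^ 2 + (1 / π - ω ^ 2 / 16) * ω ^ 2 / 4 * r ^ 2
      + ω ^ 4 / 64 * r ^ 4 := by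
  rw [tfDensity]; ring

lemma two_mul_tfDensity_sub (r : ℝ) :
    2 * tfDensity ω r - ω ^ 2 / 4 * r ^ 2 = 2 / π - ω ^ 2 / 8 := by
  rw [tfDensity]; ring

lemma integrableOn_unitBall_tfDensity_sq :
    IntegrableOn (fun x : EuclideanSpace ℝ (Fin 2) => tfDensity ω ‖x‖ ^ 2) (ball 0 1) :=
  Continuous.integrableOn_ball (by unfold tfDensity; fun_prop) 0 1

lemma setIntegral_unitBall_tfDensity_sq :
    ∫ x in ball (0 : EuclideanSpace ℝ (Fin 2)) 1, tfDensity ω ‖x‖ ^ 2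
      = 1 / π + π * ω ^ 4 / 768 := by
  simp_rw [tfDensity_sq]
  rw [setIntegral_unitBall_fin_two_quartic]
  field_simp
  ring

lemma setIntegral_unitBall_tfEnergy :
    ∫ x in ball (0 : EuclideanSpace ℝ (Fin 2)) 1,
        (tfDensity ω ‖x‖ ^ 2 - ω ^ 2 * ‖x‖ ^ 2 * tfDensity ω ‖x‖ / 4)
      = 1 / π - ω ^ 2 / 8 - π * ω ^ 4 / 768 := by
  have hquartic (r : ℝ) : tfDensity ω r ^ 2 - ω ^ 2 * r ^ 2 * tfDensity ω r / 4
      = (1 / π - ω ^ 2 / 16) ^ 2 + 0 * r ^ 2 + -(ω ^ 4 / 64) * r ^ 4 := by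
    rw [tfDensity]; ring
  simp_rw [hquartic]
  rw [setIntegral_unitBall_fin_two_quartic]
  field_simp
  ring

end ThomasFermi

theorem tf_minimization_no_hole_general (ω : ℝ)
    (ρTF : ℝ → ℝ) (hρTF : ∀ r, ρTF r = 1 / π + ω ^ 2 / 16 - ω ^ 2 / 8 * (1 - r ^ 2)) :
    (∀ ρ : EuclideanSpace ℝ (Fin 2) → ℝ,
      (∀ x, 0 ≤ ρ x) →
      IntegrableOn ρ (Metric.ball (0 : EuclideanSpace ℝ (Fin 2)) 1) →
      IntegrableOn (fun x => ρ x ^ 2) (Metric.ball (0 : EuclideanSpace ℝ (Fin 2)) 1) →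
      (∫ x in Metric.ball (0 : EuclideanSpace ℝ (Fin 2)) 1, ρ x) = 1 →
      1 / π - ω ^ 2 / 8 - π * ω ^ 4 / 768 ≤
        ∫ x in Metric.ball (0 : EuclideanSpace ℝ (Fin 2)) 1,
          (ρ x ^ 2 - ω ^ 2 * ‖x‖ ^ 2 * ρ x / 4)) ∧
    (∫ x in Metric.ball (0 : EuclideanSpace ℝ (Fin 2)) 1,
        (ρTF ‖x‖ ^ 2 - ω ^ 2 * ‖x‖ ^ 2 * ρTF ‖x‖ / 4))
      = 1 / π - ω ^ 2 / 8 - π * ω ^ 4 / 768 := by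
  obtain rfl : ρTF = tfDensity ω := funext hρTF
  refine ⟨fun ρ _ hρ hρ2 hmass => ?_, setIntegral_unitBall_tfEnergy ω⟩
  have hVρ : IntegrableOn (fun x => ω ^ 2 / 4 * ‖x‖ ^ 2 * ρ x) (ball 0 1) := by
    simpa only [IntegrableOn, mul_assoc] using
      (IntegrableOn.norm_pow_mul_unitBall hρ 2).const_mul (ω ^ 2 / 4)
  calc 1 / π - ω ^ 2 / 8 - π * ω ^ 4 / 768
      = 2 / π - ω ^ 2 / 8 - ∫ x in ball (0 : EuclideanSpace ℝ (Fin 2)) 1, tfDensity ω ‖x‖ ^ 2 := by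
        rw [setIntegral_unitBall_tfDensity_sq]; ring
    _ ≤ ∫ x in ball (0 : EuclideanSpace ℝ (Fin 2)) 1, (ρ x ^ 2 - ω ^ 2 / 4 * ‖x‖ ^ 2 * ρ x) :=
        sub_integral_sq_le_integral_sq_sub_mul hρ hρ2 hVρ (integrableOn_unitBall_tfDensity_sq ω)
          (ae_of_all _ fun x => two_mul_tfDensity_sub ω ‖x‖) hmass
    _ = _ := by
        congr 1 with x
        ring

theorem tf_minimization_no_hole (ω : ℝ) (hω0 : 0 < ω) (hω : ω ≤ 4 / Real.sqrt π)
    (ρTF : ℝ → ℝ) (hρTF : ∀ r, ρTF r = 1 / π + ω ^ 2 / 16 - ω ^ 2 / 8 * (1 - r ^ 2)) :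
    (∀ ρ : EuclideanSpace ℝ (Fin 2) → ℝ,
      (∀ x, 0 ≤ ρ x) →
      IntegrableOn ρ (Metric.ball (0 : EuclideanSpace ℝ (Fin 2)) 1) →
      IntegrableOn (fun x => ρ x ^ 2) (Metric.ball (0 : EuclideanSpace ℝ (Fin 2)) 1) →
      (∫ x in Metric.ball (0 : EuclideanSpace ℝ (Fin 2)) 1, ρ x) = 1 →
      1 / π - ω ^ 2 / 8 - π * ω ^ 4 / 768 ≤
        ∫ x in Metric.ball (0 : EuclideanSpace ℝ (Fin 2)) 1,
          (ρ x ^ 2 - ω ^ 2 * ‖x‖ ^ 2 * ρ x / 4)) ∧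
    (∫ x in Metric.ball (0 : EuclideanSpace ℝ (Fin 2)) 1,
        (ρTF ‖x‖ ^ 2 - ω ^ 2 * ‖x‖ ^ 2 * ρTF ‖x‖ / 4))
      = 1 / π - ω ^ 2 / 8 - π * ω ^ 4 / 768 :=
  tf_minimization_no_hole_general ω ρTF hρTF
end

section
/- For every nonnegative integrable ρ on the unit disc B₁ with ∫_{B₁} ρ = 1 and ρ ∈ L², one has ∫_{B₁}(ρ² − ω²r²ρ/4) dx − E^{TF} ≥ ∫_{B₁} (ρ − ρ^{TF})² dx, where ρ^{TF} is the TF minimizer and E^{TF} the TF minimum; equivalently, the excess TF energy dominates the squared L² distance to the minimizer. (Here one uses the pointwise inequality 2ρ^{TF}(r) ≥ ε²μ^{TF} + ω²r²/4 and the identity μ^{TF} = E^{TF} + ‖ρ^{TF}‖₂² in rescaled units.) -/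
/-!
At each point the Thomas–Fermi profile `g = ½[μ + V]₊` minimizes `t ↦ t² - V t - μ t` over
`t ≥ 0`, and its first-order condition `(a - g)(2g - V - μ) ≥ 0` for all `a ≥ 0` is, after
expanding, `(a - g)² + μ (a - g) ≤ (a² - V a) - (g² - V g)`. Integrating against a density `ρ`
with the same mass as `g` kills the term `μ (a - g)`.
-/

open MeasureTheory

noncomputable def thomasFermiProfile (μ V : ℝ) : ℝ := 1 / 2 * max 0 (μ + V)

namespace thomasFermiProfile

theorem continuous (μ : ℝ) : Continuous (thomasFermiProfile μ) := by
  unfold thomasFermiProfile; fun_prop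

theorem norm_le {μ V C : ℝ} (hV : ‖V‖ ≤ C) : ‖thomasFermiProfile μ V‖ ≤ (|μ| + C) / 2 := by
  rw [Real.norm_eq_abs] at hV ⊢
  unfold thomasFermiProfile
  rw [abs_of_nonneg (by positivity)]
  have : max 0 (μ + V) ≤ |μ| + C :=
    max_le (by linarith [abs_nonneg μ, abs_nonneg V]) (by linarith [le_abs_self μ, le_abs_self V])
  linarith

theorem sub_mul_two_mul_sub_sub_nonneg {μ V a : ℝ} (ha : 0 ≤ a) :
    0 ≤ (a - thomasFermiProfile μ V) * (2 * thomasFermiProfile μ V - V - μ) := by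
  unfold thomasFermiProfile
  rcases le_total 0 (μ + V) with h | h
  · rw [max_eq_right h, show 2 * (1 / 2 * (μ + V)) - V - μ = 0 by ring, mul_zero]
  · rw [max_eq_left h]; nlinarith

theorem sq_sub_add_le_excess {μ V a : ℝ} (ha : 0 ≤ a) :
    (a - thomasFermiProfile μ V) ^ 2 + μ * (a - thomasFermiProfile μ V)
      ≤ (a ^ 2 - V * a) - (thomasFermiProfile μ V ^ 2 - V * thomasFermiProfile μ V) := by
  have hexpand : (a ^ 2 - V * a) - (thomasFermiProfile μ V ^ 2 - V * thomasFermiProfile μ V)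
      - ((a - thomasFermiProfile μ V) ^ 2 + μ * (a - thomasFermiProfile μ V))
      = (a - thomasFermiProfile μ V) * (2 * thomasFermiProfile μ V - V - μ) := by ring
  linarith [sub_mul_two_mul_sub_sub_nonneg (μ := μ) (V := V) ha]

end thomasFermiProfile

theorem integral_sq_sub_thomasFermiProfile_le {α : Type*} [MeasurableSpace α] {ν : Measure α}
    [IsFiniteMeasure ν] {μ C : ℝ} {V ρ g : α → ℝ} (hg : ∀ x, g x = thomasFermiProfile μ (V x))
    (hV : AEStronglyMeasurable V ν) (hVC : ∀ᵐ x ∂ν, ‖V x‖ ≤ C) (hρ0 : 0 ≤ᵐ[ν] ρ)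
    (hρ : Integrable ρ ν) (hρ2 : Integrable (fun x => ρ x ^ 2) ν)
    (hmass : ∫ x, ρ x ∂ν = ∫ x, g x ∂ν) :
    ∫ x, (ρ x - g x) ^ 2 ∂ν ≤ ∫ x, (ρ x ^ 2 - V x * ρ x) ∂ν - ∫ x, (g x ^ 2 - V x * g x) ∂ν := by
  have hg_meas : AEStronglyMeasurable g ν :=
    funext hg ▸ (thomasFermiProfile.continuous μ).comp_aestronglyMeasurable hV
  have hg_bdd : ∀ᵐ x ∂ν, ‖g x‖ ≤ (|μ| + C) / 2 :=
    hVC.mono fun x hx => hg x ▸ thomasFermiProfile.norm_le hx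
  have hg_int : Integrable g ν := .of_bound hg_meas _ hg_bdd
  have hgρ : Integrable (fun x => g x * ρ x) ν := hρ.bdd_mul hg_meas hg_bdd
  have hgg : Integrable (fun x => g x * g x) ν := hg_int.bdd_mul hg_meas hg_bdd
  have hVρ : Integrable (fun x => V x * ρ x) ν := hρ.bdd_mul hV hVC
  have hVg : Integrable (fun x => V x * g x) ν := hg_int.bdd_mul hV hVC
  have hdist : Integrable (fun x => (ρ x - g x) ^ 2) ν :=
    ((hρ2.sub (hgρ.const_mul 2)).add hgg).congr
      (.of_forall fun x => by simp only [Pi.add_apply, Pi.sub_apply]; ring)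
  have hlin : Integrable (fun x => μ * (ρ x - g x)) ν := (hρ.sub hg_int).const_mul μ
  have hρE : Integrable (fun x => ρ x ^ 2 - V x * ρ x) ν := hρ2.sub hVρ
  have hgE : Integrable (fun x => g x ^ 2 - V x * g x) ν :=
    (hgg.sub hVg).congr (.of_forall fun x => by simp only [Pi.sub_apply]; ring)
  have hexcess := hρE.sub hgE
  calc ∫ x, (ρ x - g x) ^ 2 ∂ν
      = ∫ x, (ρ x - g x) ^ 2 ∂ν + μ * (∫ x, ρ x ∂ν - ∫ x, g x ∂ν) := by rw [hmass]; ring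
    _ = ∫ x, ((ρ x - g x) ^ 2 + μ * (ρ x - g x)) ∂ν := by
      rw [integral_add hdist hlin, integral_const_mul, integral_sub hρ hg_int]
    _ ≤ ∫ x, ((ρ x ^ 2 - V x * ρ x) - (g x ^ 2 - V x * g x)) ∂ν :=
      integral_mono_ae (hdist.add hlin) hexcess <| hρ0.mono fun x hx => by
        simpa only [hg] using thomasFermiProfile.sq_sub_add_le_excess hx
    _ = _ := integral_sub hρE hgE

theorem tf_excess_energy_bounds_L2_distance_general (ω : ℝ) (μ : ℝ)
    (ρTF : ℝ → ℝ) (hρTF : ∀ r, ρTF r = 1 / 2 * max 0 (μ + ω ^ 2 * r ^ 2 / 4))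
    (hnorm : (∫ x in Metric.ball (0 : EuclideanSpace ℝ (Fin 2)) 1, ρTF ‖x‖) = 1)
    (ETF : ℝ)
    (hETF : ETF = ∫ x in Metric.ball (0 : EuclideanSpace ℝ (Fin 2)) 1,
        (ρTF ‖x‖ ^ 2 - ω ^ 2 * ‖x‖ ^ 2 * ρTF ‖x‖ / 4))
    (ρ : EuclideanSpace ℝ (Fin 2) → ℝ)
    (hρpos : ∀ x, 0 ≤ ρ x)
    (hρ1 : IntegrableOn ρ (Metric.ball (0 : EuclideanSpace ℝ (Fin 2)) 1))
    (hρ2 : IntegrableOn (fun x => ρ x ^ 2) (Metric.ball (0 : EuclideanSpace ℝ (Fin 2)) 1))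
    (hρnorm : (∫ x in Metric.ball (0 : EuclideanSpace ℝ (Fin 2)) 1, ρ x) = 1) :
    (∫ x in Metric.ball (0 : EuclideanSpace ℝ (Fin 2)) 1, (ρ x - ρTF ‖x‖) ^ 2)
      ≤ (∫ x in Metric.ball (0 : EuclideanSpace ℝ (Fin 2)) 1,
          (ρ x ^ 2 - ω ^ 2 * ‖x‖ ^ 2 * ρ x / 4)) - ETF := by
  have : IsFiniteMeasure (volume.restrict (Metric.ball (0 : EuclideanSpace ℝ (Fin 2)) 1)) :=
    isFiniteMeasure_restrict.2 measure_ball_lt_top.ne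
  have hV_bdd : ∀ᵐ x ∂volume.restrict (Metric.ball (0 : EuclideanSpace ℝ (Fin 2)) 1),
      ‖ω ^ 2 * ‖x‖ ^ 2 / 4‖ ≤ ω ^ 2 / 4 := by
    refine (ae_restrict_iff' measurableSet_ball).2 (.of_forall fun x hx => ?_)
    have hx1 : ‖x‖ ^ 2 ≤ 1 := pow_le_one₀ (norm_nonneg x) (mem_ball_zero_iff.1 hx).le
    rw [Real.norm_eq_abs, abs_of_nonneg (by positivity)]
    gcongr
    nlinarith
  have key := integral_sq_sub_thomasFermiProfile_le (g := fun x => ρTF ‖x‖)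
    (fun x => hρTF ‖x‖) (by fun_prop) hV_bdd (.of_forall hρpos) hρ1 hρ2 (hρnorm.trans hnorm.symm)
  subst hETF
  convert key using 4 <;> ring

theorem tf_excess_energy_bounds_L2_distance (ω : ℝ) (hω : 0 < ω) (μ : ℝ)
    (ρTF : ℝ → ℝ) (hρTF : ∀ r, ρTF r = 1 / 2 * max 0 (μ + ω ^ 2 * r ^ 2 / 4))
    (hnorm : (∫ x in Metric.ball (0 : EuclideanSpace ℝ (Fin 2)) 1, ρTF ‖x‖) = 1)
    (ETF : ℝ)
    (hETF : ETF = ∫ x in Metric.ball (0 : EuclideanSpace ℝ (Fin 2)) 1,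
        (ρTF ‖x‖ ^ 2 - ω ^ 2 * ‖x‖ ^ 2 * ρTF ‖x‖ / 4))
    (hμ : μ = ETF + ∫ x in Metric.ball (0 : EuclideanSpace ℝ (Fin 2)) 1, ρTF ‖x‖ ^ 2)
    (ρ : EuclideanSpace ℝ (Fin 2) → ℝ)
    (hρpos : ∀ x, 0 ≤ ρ x)
    (hρ1 : IntegrableOn ρ (Metric.ball (0 : EuclideanSpace ℝ (Fin 2)) 1))
    (hρ2 : IntegrableOn (fun x => ρ x ^ 2) (Metric.ball (0 : EuclideanSpace ℝ (Fin 2)) 1))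
    (hρnorm : (∫ x in Metric.ball (0 : EuclideanSpace ℝ (Fin 2)) 1, ρ x) = 1) :
    (∫ x in Metric.ball (0 : EuclideanSpace ℝ (Fin 2)) 1, (ρ x - ρTF ‖x‖) ^ 2)
      ≤ (∫ x in Metric.ball (0 : EuclideanSpace ℝ (Fin 2)) 1,
          (ρ x ^ 2 - ω ^ 2 * ‖x‖ ^ 2 * ρ x / 4)) - ETF :=
  tf_excess_energy_bounds_L2_distance_general ω μ ρTF hρTF hnorm ETF hETF ρ hρpos hρ1 hρ2 hρnorm
end

section
/- If 2ρ^{TF}(r) ≥ a + br² pointwise on B₁ for constants a,b, and U ≥ 0 with ∫U = 1, then ∫_{B₁}(U − ρ^{TF})² ≤ ∫_{B₁}[U² − aU − br²U + (ρ^{TF})²] = E^{TF}-functional excess; in particular the L² distance squared between U and ρ^{TF} is bounded by ε²(E^{TF}[U] − E^{TF}[ρ^{TF}]) when a = ε²μ^{TF}, b = ω²/4. -/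
/-!
Since `U ≥ 0` and `2ρ ≥ a + b r²` on the disc, `-2Uρ ≤ -(a + b r²)U` pointwise, so expanding
`(U - ρ)²` gives the inequality. For the identity, `∫U = 1` turns `∫aU` into `a`, and the
chemical potential relation `ε²μ = ε² E^{TF} + ∫ρ²` makes the `∫ρ²` terms cancel.
-/

open Real MeasureTheory

theorem sub_sq_le_of_le_two_mul {u v c : ℝ} (hu : 0 ≤ u) (hc : c ≤ 2 * v) :
    (u - v) ^ 2 ≤ u ^ 2 - c * u + v ^ 2 := by
  nlinarith [mul_le_mul_of_nonneg_left hc hu]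

section

variable {α : Type*} [MeasurableSpace α] {μ : Measure α}

theorem integral_sub_sq_le_of_le_two_mul {f g c : α → ℝ}
    (hf0 : ∀ᵐ x ∂μ, 0 ≤ f x) (hc : ∀ᵐ x ∂μ, c x ≤ 2 * g x)
    (hf2 : Integrable (fun x => f x ^ 2) μ) (hg2 : Integrable (fun x => g x ^ 2) μ)
    (hfg : Integrable (fun x => f x * g x) μ) (hcf : Integrable (fun x => c x * f x) μ) :
    ∫ x, (f x - g x) ^ 2 ∂μ ≤ ∫ x, (f x ^ 2 - c x * f x + g x ^ 2) ∂μ := by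
  have hlhs : Integrable (fun x => (f x - g x) ^ 2) μ := by
    have := (hf2.sub (hfg.const_mul 2)).add hg2
    refine this.congr (Filter.Eventually.of_forall fun x => ?_)
    simp only [Pi.add_apply, Pi.sub_apply]
    ring
  refine integral_mono_ae hlhs ((hf2.sub hcf).add hg2) ?_
  filter_upwards [hf0, hc] with x hx0 hxc
  exact sub_sq_le_of_le_two_mul hx0 hxc

theorem integral_sq_sub_mul_add_of_integral_eq_one {f w G : α → ℝ} (hf : Integrable f μ)
    (hf2 : Integrable (fun x => f x ^ 2) μ) (hwf : Integrable (fun x => w x * f x) μ)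
    (hG : Integrable G μ) (hf1 : ∫ x, f x ∂μ = 1) (a b : ℝ) :
    ∫ x, (f x ^ 2 - a * f x - b * w x * f x + G x) ∂μ
      = ∫ x, (f x ^ 2 - b * (w x * f x)) ∂μ - a + ∫ x, G x ∂μ := by
  have hI : Integrable (fun x => f x ^ 2 - b * (w x * f x)) μ := hf2.sub (hwf.const_mul b)
  have hIa : Integrable (fun x => f x ^ 2 - b * (w x * f x) - a * f x) μ :=
    hI.sub (hf.const_mul a)
  calc ∫ x, (f x ^ 2 - a * f x - b * w x * f x + G x) ∂μ
      = ∫ x, ((f x ^ 2 - b * (w x * f x)) - a * f x + G x) ∂μ := by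
        congr 1; ext x; ring
    _ = ∫ x, (f x ^ 2 - b * (w x * f x)) ∂μ - a + ∫ x, G x ∂μ := by
        rw [integral_add hIa hG, integral_sub hI (hf.const_mul a),
          integral_const_mul, hf1, mul_one]

end

theorem tf_l2_distance_excess_general (ε ω μ ETF : ℝ) (hε : 0 < ε)
    (ρTF : ℝ → ℝ)
    (hρTF : ∀ r, ρTF r = 1 / 2 * max 0 (ε ^ 2 * μ + ω ^ 2 * r ^ 2 / 4))
    (hμ : μ = ETF + ε ^ (-2 : ℤ) *
        ∫ x in Metric.ball (0 : EuclideanSpace ℝ (Fin 2)) 1, ρTF ‖x‖ ^ 2)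
    (a b : ℝ) (ha : a = ε ^ 2 * μ) (hb : b = ω ^ 2 / 4)
    (hpt : ∀ x : EuclideanSpace ℝ (Fin 2), ‖x‖ ≤ 1 → a + b * ‖x‖ ^ 2 ≤ 2 * ρTF ‖x‖)
    (U : EuclideanSpace ℝ (Fin 2) → ℝ)
    (hUpos : ∀ x, 0 ≤ U x)
    (hU1 : IntegrableOn U (Metric.ball (0 : EuclideanSpace ℝ (Fin 2)) 1))
    (hU2 : IntegrableOn (fun x => U x ^ 2) (Metric.ball (0 : EuclideanSpace ℝ (Fin 2)) 1))
    (hUnorm : (∫ x in Metric.ball (0 : EuclideanSpace ℝ (Fin 2)) 1, U x) = 1) :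
    (∫ x in Metric.ball (0 : EuclideanSpace ℝ (Fin 2)) 1, (U x - ρTF ‖x‖) ^ 2)
      ≤ (∫ x in Metric.ball (0 : EuclideanSpace ℝ (Fin 2)) 1,
          (U x ^ 2 - a * U x - b * ‖x‖ ^ 2 * U x + ρTF ‖x‖ ^ 2)) ∧
    (∫ x in Metric.ball (0 : EuclideanSpace ℝ (Fin 2)) 1,
        (U x ^ 2 - a * U x - b * ‖x‖ ^ 2 * U x + ρTF ‖x‖ ^ 2))
      = ε ^ 2 * ((ε ^ (-2 : ℤ) * ∫ x in Metric.ball (0 : EuclideanSpace ℝ (Fin 2)) 1,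
          (U x ^ 2 - ω ^ 2 * ‖x‖ ^ 2 * U x / 4)) - ETF) := by
  set B := Metric.ball (0 : EuclideanSpace ℝ (Fin 2)) 1
  have hB : MeasurableSet B := measurableSet_ball
  have hK := isCompact_closedBall (0 : EuclideanSpace ℝ (Fin 2)) 1
  have hρ : Continuous fun x : EuclideanSpace ℝ (Fin 2) => ρTF ‖x‖ := by
    simp only [hρTF]; fun_prop
  have hr2 : Continuous fun x : EuclideanSpace ℝ (Fin 2) => ‖x‖ ^ 2 := by fun_prop
  have hUρ : IntegrableOn (fun x => U x * ρTF ‖x‖) B :=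
    hU1.mul_continuousOn_of_subset hρ.continuousOn hB hK Metric.ball_subset_closedBall
  have hr2U : IntegrableOn (fun x => ‖x‖ ^ 2 * U x) B :=
    hU1.continuousOn_mul_of_subset hr2.continuousOn hK hB Metric.ball_subset_closedBall
  have hρ2 : IntegrableOn (fun x => ρTF ‖x‖ ^ 2) B :=
    ((hρ.pow 2).continuousOn.integrableOn_compact hK).mono_set Metric.ball_subset_closedBall
  constructor
  · refine (integral_sub_sq_le_of_le_two_mul (c := fun x => a + b * ‖x‖ ^ 2)
      (Filter.Eventually.of_forall hUpos)
      ((ae_restrict_mem hB).mono fun x hx => hpt x (mem_ball_zero_iff.mp hx).le)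
      hU2 hρ2 hUρ ((hU1.const_mul a).add (hr2U.const_mul b) |>.congr ?_)).trans_eq ?_
    · exact Filter.Eventually.of_forall fun x => by simp only [Pi.add_apply]; ring
    · exact setIntegral_congr_fun hB fun x _ => by ring
  · have hquad : ∫ x in B, (U x ^ 2 - ω ^ 2 * ‖x‖ ^ 2 * U x / 4)
        = ∫ x in B, (U x ^ 2 - b * (‖x‖ ^ 2 * U x)) :=
      setIntegral_congr_fun hB fun x _ => by rw [hb]; ring
    rw [integral_sq_sub_mul_add_of_integral_eq_one hU1 hU2 hr2U hρ2 hUnorm, hquad, ha, hμ,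
      zpow_neg, zpow_two]
    field_simp
    ring

theorem tf_l2_distance_excess (ε ω μ ETF : ℝ) (hε : 0 < ε) (hω : 0 < ω)
    (ρTF : ℝ → ℝ)
    (hρTF : ∀ r, ρTF r = 1 / 2 * max 0 (ε ^ 2 * μ + ω ^ 2 * r ^ 2 / 4))
    (hnorm : (∫ x in Metric.ball (0 : EuclideanSpace ℝ (Fin 2)) 1, ρTF ‖x‖) = 1)
    (hETF : ETF = ε ^ (-2 : ℤ) * ∫ x in Metric.ball (0 : EuclideanSpace ℝ (Fin 2)) 1,
        (ρTF ‖x‖ ^ 2 - ω ^ 2 * ‖x‖ ^ 2 * ρTF ‖x‖ / 4))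
    (hμ : μ = ETF + ε ^ (-2 : ℤ) *
        ∫ x in Metric.ball (0 : EuclideanSpace ℝ (Fin 2)) 1, ρTF ‖x‖ ^ 2)
    (a b : ℝ) (ha : a = ε ^ 2 * μ) (hb : b = ω ^ 2 / 4)
    (hpt : ∀ x : EuclideanSpace ℝ (Fin 2), ‖x‖ ≤ 1 → a + b * ‖x‖ ^ 2 ≤ 2 * ρTF ‖x‖)
    (U : EuclideanSpace ℝ (Fin 2) → ℝ)
    (hUpos : ∀ x, 0 ≤ U x)
    (hU1 : IntegrableOn U (Metric.ball (0 : EuclideanSpace ℝ (Fin 2)) 1))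
    (hU2 : IntegrableOn (fun x => U x ^ 2) (Metric.ball (0 : EuclideanSpace ℝ (Fin 2)) 1))
    (hUnorm : (∫ x in Metric.ball (0 : EuclideanSpace ℝ (Fin 2)) 1, U x) = 1) :
    (∫ x in Metric.ball (0 : EuclideanSpace ℝ (Fin 2)) 1, (U x - ρTF ‖x‖) ^ 2)
      ≤ (∫ x in Metric.ball (0 : EuclideanSpace ℝ (Fin 2)) 1,
          (U x ^ 2 - a * U x - b * ‖x‖ ^ 2 * U x + ρTF ‖x‖ ^ 2)) ∧
    (∫ x in Metric.ball (0 : EuclideanSpace ℝ (Fin 2)) 1,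
        (U x ^ 2 - a * U x - b * ‖x‖ ^ 2 * U x + ρTF ‖x‖ ^ 2))
      = ε ^ 2 * ((ε ^ (-2 : ℤ) * ∫ x in Metric.ball (0 : EuclideanSpace ℝ (Fin 2)) 1,
          (U x ^ 2 - ω ^ 2 * ‖x‖ ^ 2 * U x / 4)) - ETF) :=
  tf_l2_distance_excess_general ε ω μ ETF hε ρTF hρTF hμ a b ha hb hpt U hUpos hU1 hU2 hUnorm
end
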